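/- Let f_1, …, f_k be continuous self-maps of a compact metric space X extended periodically to f_{1,∞}. If the autonomous system (X, g) with g = f_k ∘ ⋯ ∘ f_1 is topologically ergodic, then the non-autonomous system (X, f_{1,∞}) is topologically ergodic. -/

import Mathlib

open Set Filter

open scoped Classical in
/-- Upper density of a set of naturals: `limsup |S ∩ {0,…,n-1}| / n`. -/
noncomputable def upperDensity (S : Set ℕ) : ℝ :=
  Filter.limsup (fun n : ℕ => (((Finset.range n).filter (· ∈ S)).card : ℝ) / n)
    Filter.atTop

/-- `ncomp f k n = f (k+n-1) ∘ ⋯ ∘ f k`; `ncomp f 1 n = f_1^n`. -/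
def ncomp {X : Type*} (f : ℕ → X → X) (k : ℕ) : ℕ → X → X
  | 0 => id
  | n + 1 => f (k + n) ∘ ncomp f k n

/-!
Along the multiples of the period the non-autonomous orbit is the orbit of `g`:
`f_1^{kn} = g^n`. So every return time `n` of `g` from `U` to `V` yields the return time `kn`
of `f_{1,∞}`, and the dilation `n ↦ kn` divides upper density by at most `k`.
-/

section UpperDensity

open scoped Classical in
noncomputable def countingRatio (S : Set ℕ) (n : ℕ) : ℝ :=
  (((Finset.range n).filter (· ∈ S)).card : ℝ) / n

lemma upperDensity_eq_limsup_countingRatio (S : Set ℕ) :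
    upperDensity S = limsup (countingRatio S) atTop := rfl

lemma countingRatio_nonneg (S : Set ℕ) (n : ℕ) : 0 ≤ countingRatio S n := by
  unfold countingRatio
  positivity

lemma countingRatio_le_one (S : Set ℕ) (n : ℕ) : countingRatio S n ≤ 1 := by
  classical
  unfold countingRatio
  apply div_le_one_of_le₀ _ n.cast_nonneg
  exact_mod_cast (Finset.card_filter_le _ _).trans_eq (Finset.card_range n)

lemma isBoundedUnder_le_countingRatio (S : Set ℕ) :
    IsBoundedUnder (· ≤ ·) atTop (countingRatio S) :=
  isBoundedUnder_of ⟨1, countingRatio_le_one S⟩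

lemma isCoboundedUnder_le_countingRatio (S : Set ℕ) :
    IsCoboundedUnder (· ≤ ·) atTop (countingRatio S) :=
  (isBoundedUnder_of ⟨0, countingRatio_nonneg S⟩).isCoboundedUnder_le

lemma countingRatio_le_mul_countingRatio_mul {S T : Set ℕ} {k : ℕ} (hk : 0 < k)
    (hST : ∀ n ∈ S, k * n ∈ T) (n : ℕ) :
    countingRatio S n ≤ k * countingRatio T (k * n) := by
  classical
  have hcard : ((Finset.range n).filter (· ∈ S)).card ≤
      ((Finset.range (k * n)).filter (· ∈ T)).card := by
    refine Finset.card_le_card_of_injOn (k * ·) ?_ ((mul_right_injective₀ hk.ne').injOn)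
    intro j hj
    simp only [Finset.coe_filter, Finset.mem_range, mem_ofPred_eq] at hj ⊢
    exact ⟨Nat.mul_lt_mul_of_pos_left hj.1 hk, hST j hj.2⟩
  have hk' : (k : ℝ) ≠ 0 := by exact_mod_cast hk.ne'
  unfold countingRatio
  rw [Nat.cast_mul, ← mul_div_assoc, mul_div_mul_left _ _ hk']
  gcongr

lemma upperDensity_le_mul_of_mul_mem {S T : Set ℕ} {k : ℕ} (hk : 0 < k)
    (hST : ∀ n ∈ S, k * n ∈ T) : upperDensity S ≤ k * upperDensity T := by
  have hk' : (0 : ℝ) < k := by exact_mod_cast hk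
  refine le_of_forall_lt_imp_le_of_dense fun c hc => ?_
  rw [upperDensity_eq_limsup_countingRatio] at hc
  have hfreq : ∃ᶠ n in atTop, c < countingRatio S n :=
    frequently_lt_of_lt_limsup (isCoboundedUnder_le_countingRatio S) hc
  have hfreq_mul : ∃ᶠ m in atTop, c / k ≤ countingRatio T m := by
    refine (tendsto_id.const_mul_atTop' hk).frequently (hfreq.mono fun n hn => ?_)
    rw [div_le_iff₀' hk']
    exact hn.le.trans (countingRatio_le_mul_countingRatio_mul hk hST n)
  rw [← div_le_iff₀' hk']
  exact le_limsup_of_frequently_le hfreq_mul (isBoundedUnder_le_countingRatio T)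

end UpperDensity

section PeriodicComposition

variable {X : Type*} (f : ℕ → X → X)

lemma ncomp_add (i n m : ℕ) : ncomp f i (n + m) = ncomp f (i + n) m ∘ ncomp f i n := by
  induction m with
  | zero => rfl
  | succ m ih =>
    change f (i + (n + m)) ∘ ncomp f i (n + m) = _
    rw [ih, ← add_assoc]
    rfl

variable {f} {k : ℕ} (hper : ∀ n, 1 ≤ n → f (n + k) = f n)
include hper

lemma ncomp_add_period {i : ℕ} (hi : 1 ≤ i) (m : ℕ) : ncomp f (i + k) m = ncomp f i m := by
  induction m with
  | zero => rfl
  | succ m ih =>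
    change f (i + k + m) ∘ _ = f (i + m) ∘ _
    rw [ih, add_right_comm, hper _ (hi.trans (Nat.le_add_right _ _))]

lemma ncomp_add_mul_period {i : ℕ} (hi : 1 ≤ i) (j m : ℕ) :
    ncomp f (i + k * j) m = ncomp f i m := by
  induction j with
  | zero => rfl
  | succ j ih =>
    rw [Nat.mul_succ, ← add_assoc, ncomp_add_period hper (hi.trans (Nat.le_add_right _ _)), ih]

lemma ncomp_one_mul_period (j : ℕ) : ncomp f 1 (k * j) = (ncomp f 1 k)^[j] := by
  induction j with
  | zero => rfl
  | succ j ih =>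
    rw [Nat.mul_succ, ncomp_add, ncomp_add_mul_period hper le_rfl, ih, Function.iterate_succ']

end PeriodicComposition

theorem ergodic_of_composition_ergodic_periodic_general {X : Type*} [MetricSpace X]
    (k : ℕ) (hk : 1 ≤ k) (f : ℕ → X → X)
    (hper : ∀ n, 1 ≤ n → f (n + k) = f n)
    (herg : ∀ U V : Set X, IsOpen U → IsOpen V → U.Nonempty → V.Nonempty →
      0 < upperDensity {n : ℕ | ((ncomp f 1 k)^[n] '' U ∩ V).Nonempty}) :
    ∀ U V : Set X, IsOpen U → IsOpen V → U.Nonempty → V.Nonempty →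
      0 < upperDensity {m : ℕ | (ncomp f 1 m '' U ∩ V).Nonempty} := by
  intro U V hU hV hUne hVne
  have hreturn : ∀ n ∈ {n : ℕ | ((ncomp f 1 k)^[n] '' U ∩ V).Nonempty},
      k * n ∈ {m : ℕ | (ncomp f 1 m '' U ∩ V).Nonempty} := by
    intro n hn
    rwa [mem_ofPred_eq, ncomp_one_mul_period hper]
  have hle := upperDensity_le_mul_of_mul_mem hk hreturn
  have hpos := herg U V hU hV hUne hVne
  exact pos_of_mul_pos_right (hpos.trans_le hle) (Nat.cast_nonneg k)

theorem ergodic_of_composition_ergodic_periodic {X : Type*} [MetricSpace X]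
    [CompactSpace X] (k : ℕ) (hk : 1 ≤ k) (f : ℕ → X → X)
    (hc : ∀ n, Continuous (f n)) (hper : ∀ n, 1 ≤ n → f (n + k) = f n)
    (herg : ∀ U V : Set X, IsOpen U → IsOpen V → U.Nonempty → V.Nonempty →
      0 < upperDensity {n : ℕ | ((ncomp f 1 k)^[n] '' U ∩ V).Nonempty}) :
    ∀ U V : Set X, IsOpen U → IsOpen V → U.Nonempty → V.Nonempty →
      0 < upperDensity {m : ℕ | (ncomp f 1 m '' U ∩ V).Nonempty} :=
  ergodic_of_composition_ergodic_periodic_general k hk f hper herg
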